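/- Let u: Σ = D₁ × (−1,1) → S² be n-axially symmetric with profile f(r,z): u(r,θ,z) = Π⁻¹(f(r,z)(cos nθ, sin nθ)). Suppose 0 < α ≤ 1/4, f(r,−1) = αrⁿ for r ∈ (0,1], f(r,z₁) ≥ 1/2 for all r ∈ (0,s] at some level z₁ ∈ (−1,1), and u ∈ H¹(Σ, S²). Then ∫_{Σ_s} |∂u/∂z|² dx dy dz ≥ s²/C for a universal constant C, where Σ_s = {(r,θ,z) ∈ Σ : r < s}. -/
import Mathlib


open MeasureTheory Real Set

noncomputable section

def sq3 (v : Fin 3 → ℝ) : ℝ := v 0 ^ 2 + v 1 ^ 2 + v 2 ^ 2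

/-- Inverse stereographic projection of the point `(t, 0) ∈ ℝ²`. -/
def invStereo (t : ℝ) : Fin 3 → ℝ :=
  ![2 * t / (1 + t ^ 2), 0, (1 - t ^ 2) / (1 + t ^ 2)]

theorem invStereo_two (t : ℝ) : invStereo t 2 = (1 - t ^ 2) / (1 + t ^ 2) := by
  simp [invStereo]

theorem invStereo_lower {t : ℝ} (h0 : 0 < t) (h1 : t ≤ 1/4) : 15/17 ≤ invStereo t 2 := by
  rw [invStereo_two, le_div_iff₀ (by positivity)]
  nlinarith

theorem invStereo_upper {t : ℝ} (h : 1/2 ≤ t) : invStereo t 2 ≤ 3/5 := by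
  rw [invStereo_two, div_le_iff₀ (by positivity)]
  nlinarith

theorem keyCS (a b : ℝ) (hab : a < b) (g g' B : ℝ → ℝ)
    (hd : ∀ x ∈ Icc a b, HasDerivAt g (g' x) x)
    (hB : ∀ z, (g' z) ^ 2 ≤ B z)
    (hBint : IntervalIntegrable B volume a b) :
    (g b - g a) ^ 2 / (b - a) ≤ ∫ z in a..b, B z := by
  have hL : 0 < b - a := sub_pos.2 hab
  -- measurability of g'
  have hmeas : AEStronglyMeasurable g' (volume.restrict (Set.uIoc a b)) := by
    have h1 : Measurable (deriv g) := measurable_deriv g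
    have h2 : g' =ᵐ[volume.restrict (Set.uIoc a b)] deriv g := by
      rw [Set.uIoc_of_le hab.le]
      rw [← MeasureTheory.Measure.restrict_congr_set Ioo_ae_eq_Ioc]
      refine (ae_restrict_iff' measurableSet_Ioo).2 (ae_of_all _ fun x hx => ?_)
      exact ((hd x ⟨hx.1.le, hx.2.le⟩).deriv).symm
    exact (h1.aestronglyMeasurable.mono_measure Measure.restrict_le_self).congr h2.symm
  have hsq : IntervalIntegrable (fun z => (g' z) ^ 2) volume a b := by
    refine hBint.mono_fun (hmeas.pow 2) (ae_of_all _ fun z => ?_)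
    simp only [Real.norm_eq_abs]
    calc |(g' z) ^ 2| = (g' z) ^ 2 := abs_of_nonneg (sq_nonneg _)
      _ ≤ B z := hB z
      _ ≤ |B z| := le_abs_self _
  have hint1 : IntervalIntegrable g' volume a b := by
    refine (hsq.add (intervalIntegrable_const (c := 1))).mono_fun hmeas
      (ae_of_all _ fun z => ?_)
    simp only [Real.norm_eq_abs, Pi.add_apply]
    have h1 : |g' z| ≤ ((g' z) ^ 2 + 1) / 2 := by nlinarith [sq_nonneg (|g' z| - 1), sq_abs (g' z)]
    have h2 : ((g' z) ^ 2 + 1) / 2 ≤ |(g' z) ^ 2 + 1| := by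
      have := sq_nonneg (g' z); rw [abs_of_nonneg (by linarith)]; linarith
    linarith
  set I := ∫ z in a..b, g' z with hI
  set J := ∫ z in a..b, (g' z) ^ 2 with hJ
  set L := b - a with hLdef
  have hftc : g b - g a = I := (intervalIntegral.integral_eq_sub_of_hasDerivAt
    (by rw [Set.uIcc_of_le hab.le]; exact hd) hint1).symm
  -- expand ∫ (L g' - I)² ≥ 0
  have h0 : 0 ≤ ∫ z in a..b, (L * g' z - I) ^ 2 :=
    intervalIntegral.integral_nonneg hab.le fun x _ => sq_nonneg _
  have hexp : (∫ z in a..b, (L * g' z - I) ^ 2)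
      = L ^ 2 * J - 2 * L * I * I + I ^ 2 * L := by
    have : ∀ z, (L * g' z - I) ^ 2
        = L ^ 2 * (g' z) ^ 2 - (2 * L * I) * g' z + I ^ 2 := by intro z; ring
    rw [intervalIntegral.integral_congr (g := fun z =>
      L ^ 2 * (g' z) ^ 2 - (2 * L * I) * g' z + I ^ 2) (fun z _ => this z)]
    rw [intervalIntegral.integral_add (((hsq.const_mul _).sub (hint1.const_mul _)))
      (intervalIntegrable_const),
      intervalIntegral.integral_sub (hsq.const_mul _) (hint1.const_mul _),
      intervalIntegral.integral_const_mul, intervalIntegral.integral_const_mul,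
      intervalIntegral.integral_const]
    simp only [smul_eq_mul, ← hI, ← hJ, ← hLdef]
    ring
  have hmain : I ^ 2 ≤ L * J := by nlinarith [hexp ▸ h0]
  have hJle : J ≤ ∫ z in a..b, B z :=
    intervalIntegral.integral_mono_on hab.le hsq hBint fun z _ => hB z
  rw [hftc, div_le_iff₀ hL]
  calc I ^ 2 ≤ L * J := hmain
    _ ≤ (∫ z in a..b, B z) * L := by rw [mul_comm]; nlinarith [hL]

/-- for an `n`-axially symmetric `H¹` map `u` on the cylinder
`Σ = D₁ × (−1,1)` with profile `f(r,z)`, if `0 < α ≤ 1/4`, `f(r,−1) = αrⁿ`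
and `f(r,z₁) ≥ 1/2` for `r ∈ (0,s]`, then
`∫_{Σ_s} |∂u/∂z|² = 2π ∫₀ˢ (∫_{−1}^{1} |∂_z U(r,z)|² dz) r dr ≥ s²/C`
for a universal constant `C`, where `U(r,z) = Π⁻¹(f(r,z), 0)` and
`|∂u/∂z|(r,θ,z) = |∂_z U(r,z)|` by axial symmetry. -/
theorem stmt16 :
    ∃ C : ℝ, 0 < C ∧
    ∀ (n : ℕ), 1 ≤ n →
    ∀ (α s z₁ : ℝ) (f : ℝ → ℝ → ℝ) (Uz : ℝ → ℝ → Fin 3 → ℝ),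
      0 < α → α ≤ 1/4 → 0 < s → s ≤ 1 → -1 < z₁ → z₁ < 1 →
      (∀ r ∈ Ioc (0:ℝ) 1, f r (-1) = α * r ^ n) →
      (∀ r ∈ Ioc (0:ℝ) s, 1/2 ≤ f r z₁) →
      (∀ r ∈ Ioc (0:ℝ) s, ∀ z ∈ Icc (-1:ℝ) 1, ∀ i : Fin 3,
        HasDerivAt (fun w => invStereo (f r w) i) (Uz r z i) z) →
      (∀ r ∈ Ioc (0:ℝ) s, IntervalIntegrable (fun z => sq3 (Uz r z)) volume (-1) 1) →
      IntervalIntegrable (fun r => (∫ z in (-1:ℝ)..1, sq3 (Uz r z)) * r) volume 0 s →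
      2 * π * (∫ r in (0:ℝ)..s, (∫ z in (-1:ℝ)..1, sq3 (Uz r z)) * r) ≥ s ^ 2 / C := by
  refine ⟨7225/864, by norm_num, ?_⟩
  intro n hn α s z₁ f Uz hα hα4 hs hs1 hz₁l hz₁r hf_bot hf_mid hderiv hint hint2
  set c₀ : ℝ := 288/7225 with hc₀
  -- per-radius lower bound
  have hkey : ∀ r ∈ Ioc (0:ℝ) s, c₀ ≤ ∫ z in (-1:ℝ)..1, sq3 (Uz r z) := by
    intro r hr
    have hr1 : r ∈ Ioc (0:ℝ) 1 := ⟨hr.1, hr.2.trans hs1⟩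
    have hBint : IntervalIntegrable (fun z => sq3 (Uz r z)) volume (-1) z₁ :=
      (hint r hr).mono_set (by
        rw [Set.uIcc_of_le hz₁l.le, Set.uIcc_of_le (by linarith : (-1:ℝ) ≤ 1)]
        exact Icc_subset_Icc le_rfl hz₁r.le)
    have hcs := keyCS (-1) z₁ hz₁l (fun w => invStereo (f r w) 2) (fun z => Uz r z 2)
      (fun z => sq3 (Uz r z))
      (fun x hx => hderiv r hr x ⟨hx.1, hx.2.trans hz₁r.le⟩ 2)
      (fun z => by simp only [sq3]; nlinarith [sq_nonneg (Uz r z 0), sq_nonneg (Uz r z 1)])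
      hBint
    -- endpoint values
    have hb : f r (-1) = α * r ^ n := hf_bot r hr1
    have ht0 : 0 < α * r ^ n := mul_pos hα (pow_pos hr.1 n)
    have ht1 : α * r ^ n ≤ 1/4 := by
      calc α * r ^ n ≤ α * 1 := by
            exact mul_le_mul_of_nonneg_left (pow_le_one₀ hr.1.le hr1.2) hα.le
        _ ≤ 1/4 := by linarith
    have hA : 15/17 ≤ invStereo (f r (-1)) 2 := by
      rw [hb]; exact invStereo_lower ht0 ht1
    have hBv : invStereo (f r z₁) 2 ≤ 3/5 := invStereo_upper (hf_mid r hr)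
    have hdiff : (invStereo (f r z₁) 2 - invStereo (f r (-1)) 2) ^ 2 ≥ (24/85) ^ 2 := by
      nlinarith
    have hLle : z₁ - (-1) ≤ 2 := by linarith
    have hL : 0 < z₁ - (-1) := by linarith
    have hstep : c₀ ≤ (invStereo (f r z₁) 2 - invStereo (f r (-1)) 2) ^ 2 / (z₁ - (-1)) := by
      rw [le_div_iff₀ hL, hc₀]
      nlinarith [hdiff, hLle]
    have h1 : c₀ ≤ ∫ z in (-1:ℝ)..z₁, sq3 (Uz r z) := hstep.trans hcs
    -- extend to the full interval
    have hBint2 : IntervalIntegrable (fun z => sq3 (Uz r z)) volume z₁ 1 :=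
      (hint r hr).mono_set (by
        rw [Set.uIcc_of_le hz₁r.le, Set.uIcc_of_le (by linarith : (-1:ℝ) ≤ 1)]
        exact Icc_subset_Icc hz₁l.le le_rfl)
    have hsplit : (∫ z in (-1:ℝ)..1, sq3 (Uz r z))
        = (∫ z in (-1:ℝ)..z₁, sq3 (Uz r z)) + ∫ z in z₁..1, sq3 (Uz r z) :=
      (intervalIntegral.integral_add_adjacent_intervals hBint hBint2).symm
    have hpos : 0 ≤ ∫ z in z₁..1, sq3 (Uz r z) :=
      intervalIntegral.integral_nonneg hz₁r.le fun z _ => by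
        simp only [sq3]; positivity
    linarith [hsplit]
  -- integrate in r
  have hmono : (∫ r in (0:ℝ)..s, c₀ * r) ≤ ∫ r in (0:ℝ)..s, (∫ z in (-1:ℝ)..1, sq3 (Uz r z)) * r := by
    refine intervalIntegral.integral_mono_on hs.le
      ((intervalIntegral.intervalIntegrable_id).const_mul c₀) hint2 fun r hrIcc => ?_
    rcases eq_or_lt_of_le hrIcc.1 with h0 | h0
    · simp [← h0]
    · have := hkey r ⟨h0, hrIcc.2⟩
      have hr0 : (0:ℝ) ≤ r := hrIcc.1
      nlinarith
  have hconst : (∫ r in (0:ℝ)..s, c₀ * r) = c₀ * (s ^ 2 / 2) := by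
    rw [intervalIntegral.integral_const_mul, integral_id]
    ring
  have hπ : (3:ℝ) ≤ π := by linarith [Real.pi_gt_three]
  have hIpos : 0 ≤ ∫ r in (0:ℝ)..s, (∫ z in (-1:ℝ)..1, sq3 (Uz r z)) * r := by
    refine le_trans ?_ hmono
    rw [hconst]; positivity
  rw [ge_iff_le, div_le_iff₀ (by norm_num : (0:ℝ) < 7225/864)]
  have h2 : c₀ * (s ^ 2 / 2) ≤ ∫ r in (0:ℝ)..s, (∫ z in (-1:ℝ)..1, sq3 (Uz r z)) * r := by
    rw [← hconst]; exact hmono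
  nlinarith [h2, hπ, sq_nonneg s]

end
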